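/- For every active configuration (v,q) of a binary tree T and dBUTA B, the map W ↦ S(W) is a bijection between the witness trees for (v,q) and the leaf sets in S^a(v,q). -/
import Mathlib


/-- Vertex-labelled binary trees: leaves labelled `σ0`, internal vertices `σ2`. -/
inductive BTree (σ0 σ2 : Type*) where
  | leaf : σ0 → BTree σ0 σ2
  | node : σ2 → BTree σ0 σ2 → BTree σ0 σ2 → BTree σ0 σ2

/-- Subtree at a position (word over `{ℓ,r}`, `false` = left, `true` = right). -/
def subtreeAt {σ0 σ2 : Type*} : BTree σ0 σ2 → List Bool → Option (BTree σ0 σ2)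
  | t, [] => some t
  | BTree.leaf _, _ :: _ => none
  | BTree.node _ l r, d :: ds => subtreeAt (if d then r else l) ds

open scoped Classical in
/-- The state of the dBUTA `(δ0, δ2)` on a tree sitting at absolute position `p`, where
the selection `S` (a set of absolute leaf positions) marks leaves with `1`. -/
noncomputable def run {σ0 σ2 Q : Type*} (δ0 : σ0 → Bool → Q) (δ2 : Q → Q → σ2 → Q)
    (S : Set (List Bool)) : BTree σ0 σ2 → List Bool → Q
  | BTree.leaf a, p => δ0 a (if p ∈ S then true else false)
  | BTree.node f l r, p =>
      δ2 (run δ0 δ2 S l (p ++ [false])) (run δ0 δ2 S r (p ++ [true])) f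

/-- The leaves of the subtree `T(p)`, as absolute positions of `T`. -/
def LeavesBelow {σ0 σ2 : Type*} (T : BTree σ0 σ2) (p : List Bool) : Set (List Bool) :=
  {w | p <+: w ∧ ∃ a, subtreeAt T w = some (BTree.leaf a)}

/-- `S^a(v,q)`: the nonempty leaf selections `S` of `T(v)` with `B(T(v),S) = q`. -/
def Sa {σ0 σ2 Q : Type*} (δ0 : σ0 → Bool → Q) (δ2 : Q → Q → σ2 → Q)
    (T : BTree σ0 σ2) (p : List Bool) (q : Q) : Set (Set (List Bool)) :=
  {S | S.Nonempty ∧ S ⊆ LeavesBelow T p ∧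
    ∃ t, subtreeAt T p = some t ∧ run δ0 δ2 S t p = q}

/-- `(v,q) ∈ Conf^∅(T)`: the empty selection evaluates to `q` on `T(v)`. -/
def ConfEmpty {σ0 σ2 Q : Type*} (δ0 : σ0 → Bool → Q) (δ2 : Q → Q → σ2 → Q)
    (T : BTree σ0 σ2) (p : List Bool) (q : Q) : Prop :=
  ∃ t, subtreeAt T p = some t ∧ run δ0 δ2 (∅ : Set (List Bool)) t p = q

/-- `(v,q)` is an active configuration. -/
def ConfA {σ0 σ2 Q : Type*} (δ0 : σ0 → Bool → Q) (δ2 : Q → Q → σ2 → Q)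
    (T : BTree σ0 σ2) (p : List Bool) (q : Q) : Prop :=
  (Sa δ0 δ2 T p q).Nonempty

/-- `S^u(v,q)`: the selections in `S^a(v,q)` hitting the leaves of every child of `v`. -/
def Su {σ0 σ2 Q : Type*} (δ0 : σ0 → Bool → Q) (δ2 : Q → Q → σ2 → Q)
    (T : BTree σ0 σ2) (p : List Bool) (q : Q) : Set (Set (List Bool)) :=
  {S | S ∈ Sa δ0 δ2 T p q ∧
    ∀ d : Bool, (subtreeAt T (p ++ [d])).isSome →
      (S ∩ LeavesBelow T (p ++ [d])).Nonempty}

/-- `(v,q)` is a useful configuration. -/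
def ConfU {σ0 σ2 Q : Type*} (δ0 : σ0 → Bool → Q) (δ2 : Q → Q → σ2 → Q)
    (T : BTree σ0 σ2) (p : List Bool) (q : Q) : Prop :=
  (Su δ0 δ2 T p q).Nonempty

/-- The edge relation of the unary-path graph `T ⊗ B` on active configurations:
`(u,p) → (v,q)` if `v` is a child of `u`, the sibling of `v` carries a `Conf^∅`
configuration, and the transition of `B` at `u` yields the state of `(u,p)`. -/
def TBedge {σ0 σ2 Q : Type*} (δ0 : σ0 → Bool → Q) (δ2 : Q → Q → σ2 → Q)
    (T : BTree σ0 σ2) : (List Bool × Q) → (List Bool × Q) → Prop :=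
  fun x y => ∃ (f : σ2) (l r : BTree σ0 σ2) (d : Bool) (q'' : Q),
    subtreeAt T x.1 = some (BTree.node f l r) ∧ y.1 = x.1 ++ [d] ∧
    ConfA δ0 δ2 T x.1 x.2 ∧ ConfA δ0 δ2 T y.1 y.2 ∧
    ConfEmpty δ0 δ2 T (x.1 ++ [!d]) q'' ∧
    (if d then δ2 q'' y.2 f else δ2 y.2 q'' f) = x.2


/-- Witness-tree shapes: `tip p q` is the one-vertex witness tree at a configuration
`(p,q)` with `p` a leaf of `T`; `ext0 p q p' q'` is a root `(p,q)` with unique child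
`(p',q')`, `p'` a leaf of `T`; `ext p q p' q' lw rw` is a root `(p,q)` whose unique
child `(p',q')` is binary with left and right witness subtrees `lw`, `rw`. -/
inductive WT (Q : Type*) where
  | tip : List Bool → Q → WT Q
  | ext0 : List Bool → Q → List Bool → Q → WT Q
  | ext : List Bool → Q → List Bool → Q → WT Q → WT Q → WT Q

/-- The configuration at the root of a witness tree. -/
def rootConf {Q : Type*} : WT Q → List Bool × Q
  | .tip p q => (p, q)
  | .ext0 p q _ _ => (p, q)
  | .ext p q _ _ _ _ => (p, q)

/-- `S(W)`: the set of `T`-leaves occurring in the leaves of a witness tree. -/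
def SW {Q : Type*} : WT Q → Set (List Bool)
  | .tip p _ => {p}
  | .ext0 _ _ p' _ => {p'}
  | .ext _ _ _ _ lw rw => SW lw ∪ SW rw

/-- Validity of a witness tree for the tree `T` and the dBUTA `(δ0,δ2)`, following the
recursive witness-tree construction. -/
inductive ValidWT {σ0 σ2 Q : Type*} (δ0 : σ0 → Bool → Q) (δ2 : Q → Q → σ2 → Q)
    (T : BTree σ0 σ2) : WT Q → Prop
  | tip (p : List Bool) (q : Q) (a : σ0) :
      subtreeAt T p = some (BTree.leaf a) → ConfA δ0 δ2 T p q →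
      ValidWT δ0 δ2 T (.tip p q)
  | ext0 (p : List Bool) (q : Q) (p' : List Bool) (q' : Q) (a : σ0) :
      (∃ f l r, subtreeAt T p = some (BTree.node f l r)) →
      Relation.ReflTransGen (TBedge δ0 δ2 T) (p, q) (p', q') →
      ConfU δ0 δ2 T p' q' →
      subtreeAt T p' = some (BTree.leaf a) →
      ValidWT δ0 δ2 T (.ext0 p q p' q')
  | ext (p : List Bool) (q : Q) (p' : List Bool) (q' : Q) (f : σ2)
      (l r : BTree σ0 σ2) (lw rw : WT Q) (q₁ q₂ : Q) :
      (∃ f' l' r', subtreeAt T p = some (BTree.node f' l' r')) →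
      Relation.ReflTransGen (TBedge δ0 δ2 T) (p, q) (p', q') →
      ConfU δ0 δ2 T p' q' →
      subtreeAt T p' = some (BTree.node f l r) →
      rootConf lw = (p' ++ [false], q₁) → rootConf rw = (p' ++ [true], q₂) →
      ConfA δ0 δ2 T (p' ++ [false]) q₁ → ConfA δ0 δ2 T (p' ++ [true]) q₂ →
      δ2 q₁ q₂ f = q' →
      ValidWT δ0 δ2 T lw → ValidWT δ0 δ2 T rw →
      ValidWT δ0 δ2 T (.ext p q p' q' lw rw)


section Aux

variable {σ0 σ2 Q : Type*} (δ0 : σ0 → Bool → Q) (δ2 : Q → Q → σ2 → Q) (T : BTree σ0 σ2)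

theorem subtreeAt_append (p : List Bool) :
    ∀ (T : BTree σ0 σ2) (s : List Bool),
    subtreeAt T (p ++ s) = (subtreeAt T p).bind (fun t => subtreeAt t s) := by
  induction p with
  | nil => intro T s; cases T <;> rfl
  | cons d p ih =>
    intro T s
    cases T with
    | leaf a => rfl
    | node f l r => simpa [subtreeAt] using ih (if d then r else l) s

theorem subtreeAt_child {T : BTree σ0 σ2} {p : List Bool}
    {f : σ2} {l r : BTree σ0 σ2} (h : subtreeAt T p = some (BTree.node f l r)) (d : Bool) :
    subtreeAt T (p ++ [d]) = some (if d then r else l) := by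
  rw [subtreeAt_append, h]
  cases d <;> simp [subtreeAt]

theorem prefix_incompat {p : List Bool} {d : Bool} {w : List Bool}
    (h1 : (p ++ [d]) <+: w) (h2 : (p ++ [!d]) <+: w) : False := by
  obtain ⟨s, rfl⟩ := h1
  obtain ⟨s', hs'⟩ := h2
  rw [List.append_assoc, List.append_assoc] at hs'
  have := List.append_cancel_left hs'
  cases d <;> simp_all

theorem run_congr {S S' : Set (List Bool)} :
    ∀ (t : BTree σ0 σ2) (p : List Bool),
    (∀ w, p <+: w → (w ∈ S ↔ w ∈ S')) → run δ0 δ2 S t p = run δ0 δ2 S' t p := by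
  intro t
  induction t with
  | leaf a =>
    intro p h
    have := h p (List.prefix_refl p)
    simp only [run]
    by_cases hp : p ∈ S
    · rw [if_pos hp, if_pos (this.mp hp)]
    · rw [if_neg hp, if_neg (fun hc => hp (this.mpr hc))]
  | node f l r ihl ihr =>
    intro p h
    simp only [run]
    rw [ihl (p ++ [false]) (fun w hw => h w ((List.prefix_append p [false]).trans hw)),
        ihr (p ++ [true]) (fun w hw => h w ((List.prefix_append p [true]).trans hw))]

theorem LeavesBelow_mono {p p' : List Bool} (h : p <+: p') :
    LeavesBelow T p' ⊆ LeavesBelow T p :=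
  fun w hw => ⟨h.trans hw.1, hw.2⟩

theorem LeavesBelow_leaf {T : BTree σ0 σ2} {p : List Bool} {a : σ0}
    (h : subtreeAt T p = some (BTree.leaf a)) : LeavesBelow T p = {p} := by
  ext w
  constructor
  · rintro ⟨⟨s, rfl⟩, a', hw⟩
    rw [subtreeAt_append, h] at hw
    cases s with
    | nil => simp
    | cons d s => simp [subtreeAt] at hw
  · rintro rfl
    exact ⟨List.prefix_refl _, a, h⟩

theorem LeavesBelow_node {T : BTree σ0 σ2} {p : List Bool} {f : σ2} {l r : BTree σ0 σ2}
    (h : subtreeAt T p = some (BTree.node f l r)) :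
    LeavesBelow T p = LeavesBelow T (p ++ [false]) ∪ LeavesBelow T (p ++ [true]) := by
  ext w
  constructor
  · rintro ⟨⟨s, rfl⟩, a', hw⟩
    cases s with
    | nil =>
      rw [List.append_nil, h] at hw
      simp at hw
    | cons d s =>
      have hpre : (p ++ [d]) <+: (p ++ d :: s) := ⟨s, by simp⟩
      cases d
      · exact Or.inl ⟨hpre, a', hw⟩
      · exact Or.inr ⟨hpre, a', hw⟩
  · rintro (hw | hw)
    · exact LeavesBelow_mono T (List.prefix_append p [false]) hw
    · exact LeavesBelow_mono T (List.prefix_append p [true]) hw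

theorem mem_LB_prefix {T : BTree σ0 σ2} {p w : List Bool} (h : w ∈ LeavesBelow T p) :
    p <+: w := h.1

theorem Sa_run {T : BTree σ0 σ2} {p : List Bool} {q : Q} {S : Set (List Bool)}
    {t : BTree σ0 σ2} (ht : subtreeAt T p = some t)
    (hS : S ∈ Sa δ0 δ2 T p q) : run δ0 δ2 S t p = q := by
  obtain ⟨-, -, t', ht', hr⟩ := hS
  rw [ht] at ht'
  cases ht'
  exact hr

theorem Sa_unique {T : BTree σ0 σ2} {p : List Bool} {q q' : Q} {S : Set (List Bool)}
    (h : S ∈ Sa δ0 δ2 T p q) (h' : S ∈ Sa δ0 δ2 T p q') : q = q' := by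
  obtain ⟨-, -, t, ht, hr⟩ := h
  rw [← hr, Sa_run δ0 δ2 ht h']

theorem Sa_leaf_eq {T : BTree σ0 σ2} {p : List Bool} {q : Q} {a : σ0}
    {S : Set (List Bool)} (h : subtreeAt T p = some (BTree.leaf a))
    (hS : S ∈ Sa δ0 δ2 T p q) : S = {p} ∧ q = δ0 a true := by
  obtain ⟨hne, hsub, -⟩ := id hS
  rw [LeavesBelow_leaf h] at hsub
  have hSeq : S = {p} := hne.subset_singleton_iff.mp hsub
  refine ⟨hSeq, ?_⟩
  have := Sa_run δ0 δ2 h hS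
  subst hSeq
  simp only [run] at this
  rw [if_pos (Set.mem_singleton p)] at this
  exact this.symm

theorem run_empty_of_subset {T : BTree σ0 σ2} {p : List Bool} {d : Bool}
    {S : Set (List Bool)} (hsub : S ⊆ LeavesBelow T (p ++ [d]))
    (t : BTree σ0 σ2) :
    run δ0 δ2 S t (p ++ [!d]) = run δ0 δ2 (∅ : Set (List Bool)) t (p ++ [!d]) := by
  refine run_congr δ0 δ2 t (p ++ [!d]) (fun w hw => ?_)
  simp only [Set.mem_empty_iff_false, iff_false]
  intro hwS
  exact prefix_incompat (hsub hwS).1 (by simpa using hw)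

theorem Sa_restrict {T : BTree σ0 σ2} {p : List Bool} {q : Q} {f : σ2}
    {l r : BTree σ0 σ2} {S : Set (List Bool)} (d : Bool)
    (h : subtreeAt T p = some (BTree.node f l r))
    (hS : S ∈ Sa δ0 δ2 T p q)
    (hd : (S ∩ LeavesBelow T (p ++ [d])).Nonempty) :
    S ∩ LeavesBelow T (p ++ [d]) ∈
      Sa δ0 δ2 T (p ++ [d]) (run δ0 δ2 S (if d then r else l) (p ++ [d])) := by
  refine ⟨hd, Set.inter_subset_right, if d then r else l, subtreeAt_child h d, ?_⟩
  refine run_congr δ0 δ2 _ (p ++ [d]) (fun w hw => ?_)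
  simp only [Set.mem_inter_iff]
  constructor
  · exact fun h' => h'.1
  · intro hwS
    exact ⟨hwS, hw, (hS.2.1 hwS).2⟩

theorem Sa_union {T : BTree σ0 σ2} {p : List Bool} {q1 q2 : Q} {f : σ2}
    {l r : BTree σ0 σ2} {S1 S2 : Set (List Bool)}
    (h : subtreeAt T p = some (BTree.node f l r))
    (h1 : S1 ∈ Sa δ0 δ2 T (p ++ [false]) q1)
    (h2 : S2 ∈ Sa δ0 δ2 T (p ++ [true]) q2) :
    S1 ∪ S2 ∈ Sa δ0 δ2 T p (δ2 q1 q2 f) := by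
  have hs1 : S1 ⊆ LeavesBelow T (p ++ [false]) := h1.2.1
  have hs2 : S2 ⊆ LeavesBelow T (p ++ [true]) := h2.2.1
  refine ⟨h1.1.mono Set.subset_union_left, ?_, BTree.node f l r, h, ?_⟩
  · rw [LeavesBelow_node h]; exact Set.union_subset_union hs1 hs2
  · simp only [run]
    have e1 : run δ0 δ2 (S1 ∪ S2) l (p ++ [false]) = run δ0 δ2 S1 l (p ++ [false]) := by
      refine run_congr δ0 δ2 l (p ++ [false]) (fun w hw => ?_)
      simp only [Set.mem_union, or_iff_left_iff_imp]
      intro hw2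
      exact absurd ((hs2 hw2).1) (fun hc => prefix_incompat hw (by simpa using hc))
    have e2 : run δ0 δ2 (S1 ∪ S2) r (p ++ [true]) = run δ0 δ2 S2 r (p ++ [true]) := by
      refine run_congr δ0 δ2 r (p ++ [true]) (fun w hw => ?_)
      simp only [Set.mem_union, or_iff_right_iff_imp]
      intro hw1
      exact absurd ((hs1 hw1).1) (fun hc => prefix_incompat hw (by simpa using hc))
    rw [e1, e2]
    have hl : subtreeAt T (p ++ [false]) = some l := by simpa using subtreeAt_child h false
    have hr : subtreeAt T (p ++ [true]) = some r := by simpa using subtreeAt_child h true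
    rw [Sa_run δ0 δ2 hl h1, Sa_run δ0 δ2 hr h2]

def sizeB {σ0 σ2 : Type*} : BTree σ0 σ2 → ℕ
  | BTree.leaf _ => 1
  | BTree.node _ l r => sizeB l + sizeB r + 1

theorem size_subtreeAt : ∀ (s : List Bool) (t t' : BTree σ0 σ2),
    subtreeAt t s = some t' → sizeB t' ≤ sizeB t := by
  intro s
  induction s with
  | nil =>
    intro t t' h
    cases t <;> (simp only [subtreeAt, Option.some.injEq] at h; rw [← h])
  | cons d s ih =>
    intro t t' h
    cases t with
    | leaf a => simp [subtreeAt] at h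
    | node f l r =>
      have := ih _ _ h
      cases d <;> simp only [sizeB] at this ⊢ <;> simp at this ⊢ <;> omega

theorem chain_prefix {x y : List Bool × Q}
    (h : Relation.ReflTransGen (TBedge δ0 δ2 T) x y) : x.1 <+: y.1 := by
  induction h with
  | refl => exact List.prefix_refl _
  | tail _ he ih =>
    obtain ⟨f, l, r, d, q'', -, hy, -⟩ := he
    rw [hy]
    exact ih.trans (List.prefix_append _ _)

theorem lift_edge {x y : List Bool × Q} {S : Set (List Bool)}
    (he : TBedge δ0 δ2 T x y) (hS : S ∈ Sa δ0 δ2 T y.1 y.2) :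
    S ∈ Sa δ0 δ2 T x.1 x.2 := by
  obtain ⟨f, l, r, d, q'', hnode, hy1, -, -, hemp, heq⟩ := he
  rw [hy1] at hS
  obtain ⟨t'', ht'', hrt''⟩ := hemp
  have hl : subtreeAt T (x.1 ++ [false]) = some l := by simpa using subtreeAt_child hnode false
  have hr : subtreeAt T (x.1 ++ [true]) = some r := by simpa using subtreeAt_child hnode true
  refine ⟨hS.1, fun w hw => LeavesBelow_mono T (List.prefix_append _ _) (hS.2.1 hw),
    BTree.node f l r, hnode, ?_⟩
  simp only [run]
  cases d
  · -- d = false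
    simp only [Bool.not_false] at ht'' hrt''
    rw [hr] at ht''
    injection ht'' with ht''
    subst ht''
    have h1 : run δ0 δ2 S l (x.1 ++ [false]) = y.2 := Sa_run δ0 δ2 hl hS
    have h2 : run δ0 δ2 S r (x.1 ++ [true]) = q'' := by
      have := run_empty_of_subset δ0 δ2 (d := false) hS.2.1 r
      simp only [Bool.not_false] at this
      rw [this]
      exact hrt''
    rw [h1, h2]
    simpa using heq
  · -- d = true
    simp only [Bool.not_true] at ht'' hrt''
    rw [hl] at ht''
    injection ht'' with ht''
    subst ht''
    have h1 : run δ0 δ2 S r (x.1 ++ [true]) = y.2 := Sa_run δ0 δ2 hr hS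
    have h2 : run δ0 δ2 S l (x.1 ++ [false]) = q'' := by
      have := run_empty_of_subset δ0 δ2 (d := true) hS.2.1 l
      simp only [Bool.not_true] at this
      rw [this]
      exact hrt''
    rw [h1, h2]
    simpa using heq

theorem lift_chain {x y : List Bool × Q} {S : Set (List Bool)}
    (h : Relation.ReflTransGen (TBedge δ0 δ2 T) x y) (hS : S ∈ Sa δ0 δ2 T y.1 y.2) :
    S ∈ Sa δ0 δ2 T x.1 x.2 := by
  induction h using Relation.ReflTransGen.head_induction_on with
  | refl => exact hS
  | head he _ ih => exact lift_edge δ0 δ2 T he ih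

theorem Su_of_leaf {p : List Bool} {q : Q} {a : σ0} {S : Set (List Bool)}
    (h : subtreeAt T p = some (BTree.leaf a)) (hS : S ∈ Sa δ0 δ2 T p q) :
    S ∈ Su δ0 δ2 T p q := by
  refine ⟨hS, fun d hd => ?_⟩
  rw [subtreeAt_append, h] at hd
  simp [subtreeAt] at hd

theorem descend : ∀ (t : BTree σ0 σ2) (p : List Bool) (q : Q) (S : Set (List Bool)),
    subtreeAt T p = some t → S ∈ Sa δ0 δ2 T p q →
    ∃ p' q', Relation.ReflTransGen (TBedge δ0 δ2 T) (p, q) (p', q') ∧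
      S ∈ Su δ0 δ2 T p' q' := by
  intro t
  induction t with
  | leaf a =>
    intro p q S ht hS
    exact ⟨p, q, Relation.ReflTransGen.refl, Su_of_leaf δ0 δ2 T ht hS⟩
  | node f l r ihl ihr =>
    intro p q S ht hS
    have hLB : S ⊆ LeavesBelow T p := hS.2.1
    have hq : δ2 (run δ0 δ2 S l (p ++ [false])) (run δ0 δ2 S r (p ++ [true])) f = q := by
      have := Sa_run δ0 δ2 ht hS
      simpa only [run] using this
    by_cases h1 : (S ∩ LeavesBelow T (p ++ [false])).Nonempty
    · by_cases h2 : (S ∩ LeavesBelow T (p ++ [true])).Nonempty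
      · exact ⟨p, q, Relation.ReflTransGen.refl, hS, fun d _ => by cases d <;> assumption⟩
      · -- S entirely on the left
        have hsub : S ⊆ LeavesBelow T (p ++ [false]) := by
          intro w hw
          rcases (LeavesBelow_node ht ▸ hLB) hw with h | h
          · exact h
          · exact absurd ⟨w, hw, h⟩ h2
        have hSl : S ∈ Sa δ0 δ2 T (p ++ [false]) (run δ0 δ2 S l (p ++ [false])) := by
          have := Sa_restrict δ0 δ2 false ht hS
            (by rw [Set.inter_eq_self_of_subset_left hsub]; exact hS.1)
          rw [Set.inter_eq_self_of_subset_left hsub] at this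
          simpa using this
        have hempr : run δ0 δ2 S r (p ++ [true]) =
            run δ0 δ2 (∅ : Set (List Bool)) r (p ++ [true]) := by
          simpa using run_empty_of_subset δ0 δ2 (d := false) hsub r
        have hedge : TBedge δ0 δ2 T (p, q) (p ++ [false], run δ0 δ2 S l (p ++ [false])) := by
          refine ⟨f, l, r, false, run δ0 δ2 (∅ : Set (List Bool)) r (p ++ [true]), ht, rfl,
            ⟨S, hS⟩, ⟨S, hSl⟩, ?_, ?_⟩
          · exact ⟨r, by simpa using subtreeAt_child ht true, rfl⟩
          · show δ2 (run δ0 δ2 S l (p ++ [false]))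
              (run δ0 δ2 (∅ : Set (List Bool)) r (p ++ [true])) f = q
            rw [← hempr, hq]
        obtain ⟨p', q', hchain, hSu⟩ := ihl (p ++ [false]) _ S
          (by simpa using subtreeAt_child ht false) hSl
        exact ⟨p', q', Relation.ReflTransGen.head hedge hchain, hSu⟩
    · -- S entirely on the right
      have hsub : S ⊆ LeavesBelow T (p ++ [true]) := by
        intro w hw
        rcases (LeavesBelow_node ht ▸ hLB) hw with h | h
        · exact absurd ⟨w, hw, h⟩ h1
        · exact h
      have hSr : S ∈ Sa δ0 δ2 T (p ++ [true]) (run δ0 δ2 S r (p ++ [true])) := by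
        have := Sa_restrict δ0 δ2 true ht hS
          (by rw [Set.inter_eq_self_of_subset_left hsub]; exact hS.1)
        rw [Set.inter_eq_self_of_subset_left hsub] at this
        simpa using this
      have hempl : run δ0 δ2 S l (p ++ [false]) =
          run δ0 δ2 (∅ : Set (List Bool)) l (p ++ [false]) := by
        simpa using run_empty_of_subset δ0 δ2 (d := true) hsub l
      have hedge : TBedge δ0 δ2 T (p, q) (p ++ [true], run δ0 δ2 S r (p ++ [true])) := by
        refine ⟨f, l, r, true, run δ0 δ2 (∅ : Set (List Bool)) l (p ++ [false]), ht, rfl,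
          ⟨S, hS⟩, ⟨S, hSr⟩, ?_, ?_⟩
        · exact ⟨l, by simpa using subtreeAt_child ht false, rfl⟩
        · show δ2 (run δ0 δ2 (∅ : Set (List Bool)) l (p ++ [false]))
            (run δ0 δ2 S r (p ++ [true])) f = q
          rw [← hempl, hq]
      obtain ⟨p', q', hchain, hSu⟩ := ihr (p ++ [true]) _ S
        (by simpa using subtreeAt_child ht true) hSr
      exact ⟨p', q', Relation.ReflTransGen.head hedge hchain, hSu⟩

theorem wt_sound {W : WT Q} (hW : ValidWT δ0 δ2 T W) :
    SW W ∈ Sa δ0 δ2 T (rootConf W).1 (rootConf W).2 := by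
  induction hW with
  | tip p q a hleaf hact =>
    obtain ⟨S, hS⟩ := hact
    have h := (Sa_leaf_eq δ0 δ2 hleaf hS).1
    simp only [SW, rootConf]
    rw [← h]
    exact hS
  | ext0 p q p' q' a hnode hchain hU hleaf =>
    obtain ⟨S, hSu⟩ := hU
    have hS : S ∈ Sa δ0 δ2 T p' q' := hSu.1
    have heq := (Sa_leaf_eq δ0 δ2 hleaf hS).1
    have h2 : ({p'} : Set (List Bool)) ∈ Sa δ0 δ2 T p' q' := heq ▸ hS
    simp only [SW, rootConf]
    exact lift_chain δ0 δ2 T hchain h2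
  | ext p q p' q' f l r lw rw q₁ q₂ hnode hchain hU hnode' hrl hrr hA1 hA2 hδ hlw hrw ihl ihr =>
    rw [hrl] at ihl
    rw [hrr] at ihr
    have hu := Sa_union δ0 δ2 hnode' ihl ihr
    rw [hδ] at hu
    simp only [SW, rootConf]
    exact lift_chain δ0 δ2 T hchain hu

theorem exists_wt : ∀ (n : ℕ) (t : BTree σ0 σ2) (p : List Bool) (q : Q) (S : Set (List Bool)),
    sizeB t ≤ n → subtreeAt T p = some t → S ∈ Sa δ0 δ2 T p q →
    ∃ W, ValidWT δ0 δ2 T W ∧ rootConf W = (p, q) ∧ SW W = S := by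
  intro n
  induction n using Nat.strong_induction_on with
  | _ n ih =>
  intro t p q S hsize ht hS
  cases t with
  | leaf a =>
    refine ⟨.tip p q, ValidWT.tip p q a ht ⟨S, hS⟩, rfl, ?_⟩
    simp only [SW]
    exact ((Sa_leaf_eq δ0 δ2 ht hS).1).symm
  | node f l r =>
    obtain ⟨p', q', hchain, hSu⟩ := descend δ0 δ2 T _ p q S ht hS
    have hS' : S ∈ Sa δ0 δ2 T p' q' := hSu.1
    obtain ⟨-, -, t', ht', -⟩ := id hS'
    obtain ⟨s, rfl⟩ : p <+: p' := chain_prefix δ0 δ2 T hchain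
    have hsub' : subtreeAt (BTree.node f l r) s = some t' := by
      rw [subtreeAt_append, ht] at ht'; exact ht'
    have hst : sizeB t' ≤ sizeB (BTree.node f l r) := size_subtreeAt _ _ _ hsub'
    cases t' with
    | leaf a =>
      refine ⟨.ext0 p q (p ++ s) q',
        ValidWT.ext0 _ _ _ _ a ⟨f, l, r, ht⟩ hchain ⟨S, hSu⟩ ht', rfl, ?_⟩
      simp only [SW]
      exact ((Sa_leaf_eq δ0 δ2 ht' hS').1).symm
    | node f' l' r' =>
      have hchl : subtreeAt T ((p ++ s) ++ [false]) = some l' := by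
        simpa using subtreeAt_child ht' false
      have hchr : subtreeAt T ((p ++ s) ++ [true]) = some r' := by
        simpa using subtreeAt_child ht' true
      have h1 : (S ∩ LeavesBelow T ((p ++ s) ++ [false])).Nonempty :=
        hSu.2 false (by rw [hchl]; rfl)
      have h2 : (S ∩ LeavesBelow T ((p ++ s) ++ [true])).Nonempty :=
        hSu.2 true (by rw [hchr]; rfl)
      have hS1 : S ∩ LeavesBelow T ((p ++ s) ++ [false]) ∈
          Sa δ0 δ2 T ((p ++ s) ++ [false]) (run δ0 δ2 S l' ((p ++ s) ++ [false])) := by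
        simpa using Sa_restrict δ0 δ2 false ht' hS' h1
      have hS2 : S ∩ LeavesBelow T ((p ++ s) ++ [true]) ∈
          Sa δ0 δ2 T ((p ++ s) ++ [true]) (run δ0 δ2 S r' ((p ++ s) ++ [true])) := by
        simpa using Sa_restrict δ0 δ2 true ht' hS' h2
      have hδ : δ2 (run δ0 δ2 S l' ((p ++ s) ++ [false]))
          (run δ0 δ2 S r' ((p ++ s) ++ [true])) f' = q' := by
        have := Sa_run δ0 δ2 ht' hS'
        simpa only [run] using this
      have hszl : sizeB l' < n := by
        simp only [sizeB] at hst hsize; omega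
      have hszr : sizeB r' < n := by
        simp only [sizeB] at hst hsize; omega
      obtain ⟨lw, hlwV, hlwR, hlwS⟩ := ih (sizeB l') hszl l' ((p ++ s) ++ [false]) _ _
        le_rfl hchl hS1
      obtain ⟨rw', hrwV, hrwR, hrwS⟩ := ih (sizeB r') hszr r' ((p ++ s) ++ [true]) _ _
        le_rfl hchr hS2
      refine ⟨.ext p q (p ++ s) q' lw rw',
        ValidWT.ext p q (p ++ s) q' f' l' r' lw rw' _ _
          ⟨f, l, r, ht⟩ hchain ⟨S, hSu⟩ ht' hlwR hrwR ⟨_, hS1⟩ ⟨_, hS2⟩ hδ hlwV hrwV,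
        rfl, ?_⟩
      simp only [SW]
      rw [hlwS, hrwS, ← Set.inter_union_distrib_left, ← LeavesBelow_node ht',
        Set.inter_eq_self_of_subset_left hS'.2.1]

theorem union_inter_side {A B : Set (List Bool)} {p : List Bool}
    (hA : A ⊆ LeavesBelow T (p ++ [false])) (hB : B ⊆ LeavesBelow T (p ++ [true])) :
    (A ∪ B) ∩ LeavesBelow T (p ++ [false]) = A ∧
    (A ∪ B) ∩ LeavesBelow T (p ++ [true]) = B := by
  constructor <;> ext w <;> constructor
  · rintro ⟨hw | hw, hwL⟩
    · exact hw
    · exact (prefix_incompat (d := false) hwL.1 (by simpa using (hB hw).1)).elim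
  · intro hw; exact ⟨Or.inl hw, hA hw⟩
  · rintro ⟨hw | hw, hwL⟩
    · exact (prefix_incompat (d := true) hwL.1 (by simpa using (hA hw).1)).elim
    · exact hw
  · intro hw; exact ⟨Or.inr hw, hB hw⟩

theorem split_unique_aux {S : Set (List Bool)} {p1 p2 : List Bool}
    (hf1 : (S ∩ LeavesBelow T (p1 ++ [false])).Nonempty)
    (ht1 : (S ∩ LeavesBelow T (p1 ++ [true])).Nonempty)
    (hs2 : S ⊆ LeavesBelow T p2) (h : p1 <+: p2) : p1 = p2 := by
  obtain ⟨s, rfl⟩ := h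
  cases s with
  | nil => simp
  | cons d s' =>
    exfalso
    cases d
    · obtain ⟨w, hwS, hwL⟩ := ht1
      have hw2 : (p1 ++ [false]) <+: w :=
        List.IsPrefix.trans (⟨s', by simp⟩ : (p1 ++ [false]) <+: (p1 ++ false :: s')) (hs2 hwS).1
      exact prefix_incompat (d := false) hw2 (by simpa using hwL.1)
    · obtain ⟨w, hwS, hwL⟩ := hf1
      have hw2 : (p1 ++ [true]) <+: w :=
        List.IsPrefix.trans (⟨s', by simp⟩ : (p1 ++ [true]) <+: (p1 ++ true :: s')) (hs2 hwS).1
      exact prefix_incompat (d := true) hw2 (by simpa using hwL.1)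

theorem split_unique {S : Set (List Bool)} {p1 p2 : List Bool}
    (hs1 : S ⊆ LeavesBelow T p1)
    (hf1 : (S ∩ LeavesBelow T (p1 ++ [false])).Nonempty)
    (ht1 : (S ∩ LeavesBelow T (p1 ++ [true])).Nonempty)
    (hs2 : S ⊆ LeavesBelow T p2)
    (hf2 : (S ∩ LeavesBelow T (p2 ++ [false])).Nonempty)
    (ht2 : (S ∩ LeavesBelow T (p2 ++ [true])).Nonempty) : p1 = p2 := by
  obtain ⟨w, hwS, -⟩ := id hf1
  rcases List.prefix_or_prefix_of_prefix (hs1 hwS).1 (hs2 hwS).1 with h | h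
  · exact split_unique_aux T hf1 ht1 hs2 h
  · exact (split_unique_aux T hf2 ht2 hs1 h).symm

theorem wt_unique : ∀ (W W' : WT Q), ValidWT δ0 δ2 T W → ValidWT δ0 δ2 T W' →
    rootConf W = rootConf W' → SW W = SW W' → W = W' := by
  intro W
  induction W with
  | tip p q =>
    intro W' hW hW' hroot hsw
    cases hW
    next a h1 h2 =>
    have hleaf : subtreeAt T p = some (BTree.leaf a) := by assumption
    cases W' with
    | tip p2 q2 =>
      simp only [rootConf, Prod.mk.injEq] at hroot
      rw [hroot.1, hroot.2]
    | ext0 p2 q2 p2' q2' =>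
      cases hW'
      next a2 h1 h2 h3 h4 =>
      have hnode2 : ∃ f l r, subtreeAt T p2 = some (BTree.node f l r) := by assumption
      exfalso
      simp only [rootConf, Prod.mk.injEq] at hroot
      obtain ⟨f2, l2, r2, hn⟩ := hnode2
      rw [← hroot.1, hleaf] at hn
      simp at hn
    | ext p2 q2 p2' q2' lw2 rw2 =>
      cases hW'
      next f2 l2 r2 q₁2 q₂2 h1 h2 h3 h4 h5 h6 h7 h8 h9 h10 h11 =>
      have hnode2 : ∃ f' l' r', subtreeAt T p2 = some (BTree.node f' l' r') := by assumption
      exfalso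
      simp only [rootConf, Prod.mk.injEq] at hroot
      obtain ⟨f2', l2', r2', hn⟩ := hnode2
      rw [← hroot.1, hleaf] at hn
      simp at hn
  | ext0 p q p' q' =>
    intro W' hW hW' hroot hsw
    cases hW
    next a h1 h2 h3 h4 =>
    have hnode : ∃ f l r, subtreeAt T p = some (BTree.node f l r) := by assumption
    have hU : ConfU δ0 δ2 T p' q' := by assumption
    have hleaf : subtreeAt T p' = some (BTree.leaf a) := by assumption
    cases W' with
    | tip p2 q2 =>
      cases hW'
      next a2 g1 g2 =>
      have hleaf2 : subtreeAt T p2 = some (BTree.leaf a2) := by assumption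
      exfalso
      simp only [rootConf, Prod.mk.injEq] at hroot
      obtain ⟨f', l', r', hn⟩ := hnode
      rw [hroot.1, hleaf2] at hn
      simp at hn
    | ext0 p2 q2 p2' q2' =>
      cases hW'
      next a2 g1 g2 g3 g4 =>
      have hU2 : ConfU δ0 δ2 T p2' q2' := by assumption
      have hleaf2 : subtreeAt T p2' = some (BTree.leaf a2) := by assumption
      simp only [rootConf, Prod.mk.injEq] at hroot
      simp only [SW] at hsw
      have hp' : p' = p2' := Set.singleton_eq_singleton_iff.mp hsw
      subst hp'
      rw [hleaf] at hleaf2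
      injection hleaf2 with ha
      injection ha with ha2
      subst ha2
      obtain ⟨S1, hSu1⟩ := hU
      obtain ⟨S2, hSu2⟩ := hU2
      have hq1 := (Sa_leaf_eq δ0 δ2 hleaf hSu1.1).2
      have hq2 := (Sa_leaf_eq δ0 δ2 hleaf hSu2.1).2
      rw [hroot.1, hroot.2, hq1, hq2]
    | ext p2 q2 p2' q2' lw2 rw2 =>
      cases hW'
      next f2 l2 r2 q₁2 q₂2 g1 g2 g3 g4 g5 g6 g7 g8 g9 g10 g11 =>
      have hrl2 : rootConf lw2 = (p2' ++ [false], q₁2) := by assumption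
      have hrr2 : rootConf rw2 = (p2' ++ [true], q₂2) := by assumption
      have hlwV2 : ValidWT δ0 δ2 T lw2 := by assumption
      have hrwV2 : ValidWT δ0 δ2 T rw2 := by assumption
      exfalso
      simp only [SW] at hsw
      have s1 := wt_sound δ0 δ2 T hlwV2
      rw [hrl2] at s1
      have s2 := wt_sound δ0 δ2 T hrwV2
      rw [hrr2] at s2
      have hl1 : p' ∈ SW lw2 := by
        obtain ⟨w, hw⟩ := s1.1
        have hmem : w ∈ ({p'} : Set (List Bool)) := hsw ▸ Or.inl hw
        rwa [Set.mem_singleton_iff.mp hmem] at hw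
      have hl2 : p' ∈ SW rw2 := by
        obtain ⟨w, hw⟩ := s2.1
        have hmem : w ∈ ({p'} : Set (List Bool)) := hsw ▸ Or.inr hw
        rwa [Set.mem_singleton_iff.mp hmem] at hw
      exact prefix_incompat (d := false) (s1.2.1 hl1).1 (by simpa using (s2.2.1 hl2).1)
  | ext p q p' q' lw rw ihl ihr =>
    intro W' hW hW' hroot hsw
    cases hW
    next f l r q₁ q₂ h1 h2 h3 h4 h5 h6 h7 h8 h9 h10 h11 =>
    have hnode : ∃ f' l' r', subtreeAt T p = some (BTree.node f' l' r') := by assumption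
    have hnode' : subtreeAt T p' = some (BTree.node f l r) := by assumption
    have hrl : rootConf lw = (p' ++ [false], q₁) := by assumption
    have hrr : rootConf rw = (p' ++ [true], q₂) := by assumption
    have hδ : δ2 q₁ q₂ f = q' := by assumption
    have hlwV : ValidWT δ0 δ2 T lw := by assumption
    have hrwV : ValidWT δ0 δ2 T rw := by assumption
    have s1 := wt_sound δ0 δ2 T hlwV
    rw [hrl] at s1
    have s2 := wt_sound δ0 δ2 T hrwV
    rw [hrr] at s2
    have hun := Sa_union δ0 δ2 hnode' s1 s2
    cases W' with
    | tip p2 q2 =>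
      cases hW'
      next a2 g1 g2 =>
      have hleaf2 : subtreeAt T p2 = some (BTree.leaf a2) := by assumption
      exfalso
      simp only [rootConf, Prod.mk.injEq] at hroot
      obtain ⟨f', l', r', hn⟩ := hnode
      rw [hroot.1, hleaf2] at hn
      simp at hn
    | ext0 p2 q2 p2' q2' =>
      cases hW'
      next a2 g1 g2 g3 g4 =>
      exfalso
      simp only [SW] at hsw
      have hl1 : p2' ∈ SW lw := by
        obtain ⟨w, hw⟩ := s1.1
        have hmem : w ∈ ({p2'} : Set (List Bool)) := hsw ▸ Or.inl hw
        rwa [Set.mem_singleton_iff.mp hmem] at hw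
      have hl2 : p2' ∈ SW rw := by
        obtain ⟨w, hw⟩ := s2.1
        have hmem : w ∈ ({p2'} : Set (List Bool)) := hsw ▸ Or.inr hw
        rwa [Set.mem_singleton_iff.mp hmem] at hw
      exact prefix_incompat (d := false) (s1.2.1 hl1).1 (by simpa using (s2.2.1 hl2).1)
    | ext p2 q2 p2' q2' lw2 rw2 =>
      cases hW'
      next f2 l2 r2 q₁2 q₂2 g1 g2 g3 g4 g5 g6 g7 g8 g9 g10 g11 =>
      have hnode2' : subtreeAt T p2' = some (BTree.node f2 l2 r2) := by assumption
      have hrl2 : rootConf lw2 = (p2' ++ [false], q₁2) := by assumption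
      have hrr2 : rootConf rw2 = (p2' ++ [true], q₂2) := by assumption
      have hδ2 : δ2 q₁2 q₂2 f2 = q2' := by assumption
      have hlwV2 : ValidWT δ0 δ2 T lw2 := by assumption
      have hrwV2 : ValidWT δ0 δ2 T rw2 := by assumption
      simp only [rootConf, Prod.mk.injEq] at hroot
      obtain ⟨hp, hq⟩ := hroot
      subst hp; subst hq
      simp only [SW] at hsw
      have s12 := wt_sound δ0 δ2 T hlwV2
      rw [hrl2] at s12
      have s22 := wt_sound δ0 δ2 T hrwV2
      rw [hrr2] at s22
      have hun2 := Sa_union δ0 δ2 hnode2' s12 s22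
      obtain ⟨e1, e2⟩ := union_inter_side T (A := SW lw) (B := SW rw) s1.2.1 s2.2.1
      obtain ⟨e12, e22⟩ := union_inter_side T (A := SW lw2) (B := SW rw2) s12.2.1 s22.2.1
      have hp' : p' = p2' := by
        refine split_unique T hun.2.1 ?_ ?_ (hsw ▸ hun2.2.1) ?_ ?_
        · rw [e1]; exact s1.1
        · rw [e2]; exact s2.1
        · rw [hsw, e12]; exact s12.1
        · rw [hsw, e22]; exact s22.1
      subst hp'
      have hSWl : SW lw = SW lw2 := by rw [← e1, hsw, e12]
      have hSWr : SW rw = SW rw2 := by rw [← e2, hsw, e22]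
      have hq1 : q₁ = q₁2 := Sa_unique δ0 δ2 s1 (hSWl ▸ s12)
      have hq2 : q₂ = q₂2 := Sa_unique δ0 δ2 s2 (hSWr ▸ s22)
      have hlweq : lw = lw2 := by
        refine ihl lw2 hlwV hlwV2 ?_ hSWl
        rw [hrl, hrl2, hq1]
      have hrweq : rw = rw2 := by
        refine ihr rw2 hrwV hrwV2 ?_ hSWr
        rw [hrr, hrr2, hq2]
      have hff : f = f2 := by
        rw [hnode'] at hnode2'
        injection hnode2' with h
        injection h
      have hq' : q' = q2' := by
        rw [← hδ, ← hδ2, hq1, hq2, hff]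
      rw [hlweq, hrweq, hq']

end Aux




/-- for every active configuration `(v,q)` of the binary tree `T` and the
dBUTA `B`, the map `W ↦ S(W)` is a bijection between the witness trees for `(v,q)` and
the leaf sets in `S^a(v,q)`. -/
theorem stmt11 {σ0 σ2 Q : Type*} (δ0 : σ0 → Bool → Q) (δ2 : Q → Q → σ2 → Q)
    (T : BTree σ0 σ2) (p : List Bool) (q : Q) (hact : ConfA δ0 δ2 T p q) :
    (∀ W : WT Q, ValidWT δ0 δ2 T W → rootConf W = (p, q) →
      SW W ∈ Sa δ0 δ2 T p q) ∧
    (∀ S ∈ Sa δ0 δ2 T p q,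
      ∃! W : WT Q, ValidWT δ0 δ2 T W ∧ rootConf W = (p, q) ∧ SW W = S) := by
  constructor
  · intro W hW hroot
    have := wt_sound δ0 δ2 T hW
    rwa [hroot] at this
  · intro S hS
    obtain ⟨-, -, t, ht, -⟩ := id hS
    obtain ⟨W, hV, hR, hS'⟩ := exists_wt δ0 δ2 T (sizeB t) t p q S le_rfl ht hS
    refine ⟨W, ⟨hV, hR, hS'⟩, ?_⟩
    rintro W' ⟨hV', hR', hS''⟩
    exact wt_unique δ0 δ2 T W' W hV' hV (by rw [hR, hR']) (by rw [hS', hS''])
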